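/- For the group element C = I₄I₁ in PU(2,1) at the point (h,t) = (√2, arccos(-7/8)), namely C = [[(2+i√15)/8, (6-i√15)/8, -51/32],[-1/2,-1/2,-(6+i√15)/8],[-1/2,1/2,(2-i√15)/8]], one has C³ = Id (up to scalar) and (AC)² = Id (up to scalar), where A = [[1,2,-2],[0,1,-2],[0,0,1]]. -/

import Mathlib

noncomputable section

def A3 : Matrix (Fin 3) (Fin 3) ℂ :=
  !![1, 2, -2;
     0, 1, -2;
     0, 0, 1]

def C3 : Matrix (Fin 3) (Fin 3) ℂ :=
  !![(2 + Complex.I * Real.sqrt 15) / 8, (6 - Complex.I * Real.sqrt 15) / 8, -(51 / 32);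
     -(1 / 2), -(1 / 2), -((6 + Complex.I * Real.sqrt 15) / 8);
     -(1 / 2), 1 / 2, (2 - Complex.I * Real.sqrt 15) / 8]

end

theorem C_order_three_AC_order_two :
    (∃ a : ℂ, ‖a‖ = 1 ∧ C3 ^ 3 = a • (1 : Matrix (Fin 3) (Fin 3) ℂ)) ∧
    (∃ b : ℂ, ‖b‖ = 1 ∧ (A3 * C3) ^ 2 = b • (1 : Matrix (Fin 3) (Fin 3) ℂ)) := by
  have hx : ((Real.sqrt 15 : ℝ) : ℂ) ^ 2 = 15 := by
    rw [← Complex.ofReal_pow, Real.sq_sqrt (by norm_num : (0:ℝ) ≤ 15)]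
    norm_num
  have hw : (Complex.I * (Real.sqrt 15 : ℝ)) ^ 2 = -15 := by
    rw [mul_pow, Complex.I_sq, hx]; ring
  have h2 : C3 * C3 =
      !![1/4 + Complex.I * Real.sqrt 15 / 8, -(3/4) + Complex.I * Real.sqrt 15 / 8, -(51/32);
         1/2, -(1/2), 3/4 + Complex.I * Real.sqrt 15 / 8;
         -(1/2), -(1/2), 1/4 - Complex.I * Real.sqrt 15 / 8] := by
    ext i j
    fin_cases i <;> fin_cases j <;>
      simp [C3, Matrix.mul_apply, Fin.sum_univ_three, Matrix.vecHead, Matrix.vecTail] <;>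
      first
        | ring1
        | linear_combination (1/64 : ℂ) * hw
        | linear_combination (-1/64 : ℂ) * hw
  have h3 : C3 ^ 3 = 1 := by
    rw [pow_succ, pow_two, h2]
    ext i j
    fin_cases i <;> fin_cases j <;>
      simp [C3, Matrix.mul_apply, Fin.sum_univ_three, Matrix.one_apply, Matrix.vecHead, Matrix.vecTail] <;>
      first
        | ring1
        | linear_combination (1/64 : ℂ) * hw
        | linear_combination (-1/64 : ℂ) * hw
  have hAC : A3 * C3 =
      !![1/4 + Complex.I * Real.sqrt 15 / 8, -(5/4) - Complex.I * Real.sqrt 15 / 8, -(115/32);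
         1/2, -(3/2), -(5/4) + Complex.I * Real.sqrt 15 / 8;
         -(1/2), 1/2, 1/4 - Complex.I * Real.sqrt 15 / 8] := by
    ext i j
    fin_cases i <;> fin_cases j <;>
      simp [A3, C3, Matrix.mul_apply, Fin.sum_univ_three, Matrix.vecHead, Matrix.vecTail] <;> ring1
  have h4 : (A3 * C3) ^ 2 = 1 := by
    rw [pow_two, hAC]
    ext i j
    fin_cases i <;> fin_cases j <;>
      simp [Matrix.mul_apply, Fin.sum_univ_three, Matrix.one_apply, Matrix.vecHead, Matrix.vecTail] <;>
      first
        | ring1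
        | linear_combination (1/64 : ℂ) * hw
        | linear_combination (-1/64 : ℂ) * hw
  exact ⟨⟨1, by simp, by rw [h3, one_smul]⟩, ⟨1, by simp, by rw [h4, one_smul]⟩⟩
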